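/- Let ε₁,...,ε_n be independent Rademacher random variables (P(ε_i = ±1) = 1/2), let B be a Banach space with norm ‖·‖ such that for some countable subset D of the unit ball of the dual B', ‖x‖ = sup_{f∈D} |f(x)| for all x ∈ B, and let x₁,...,x_n be arbitrary points in B. Put Z := ‖Σ_{i=1}^n ε_i x_i‖ and σ := sup_{f∈D} √(Σ_{i=1}^n f(x_i)²). Then for every λ > 0, E[e^{λZ}] ≤ 16 exp( λ√(2 E[Z²]) + 4(λσ)² ). -/

import Mathlib

/-!
Identify the Rademacher vector with the uniform measure on the Boolean cube, so that
`Z = c s` with `c s = ‖∑ i, s i • x i‖`. Testing against an almost norming `f ∈ D` shows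
that flipping the `i`-th sign lowers `c` by at most `2 |f (x i)|`, hence
`∑ i, (c s - c (flip i s))₊² ≤ 4 σ²`. Tensorization of entropy over the cube, which rests
on the subadditivity of the two-point entropy, turns this into the modified logarithmic
Sobolev inequality `Ent (e^{λZ}) ≤ 2 σ² λ² E e^{λZ}`, and Herbst's argument integrates it
to `E e^{λZ} ≤ exp (λ E Z + 2 σ² λ²)`. Finally `E Z ≤ √(E Z²)`.
-/

noncomputable section

open MeasureTheory ProbabilityTheory Real

/-- Twice the entropy of `(a, b)` under the uniform measure on two points. -/
def pairEntropy (a b : ℝ) : ℝ :=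
  a * log a + b * log b - (a + b) * log ((a + b) / 2)

lemma pairEntropy_comm (a b : ℝ) : pairEntropy a b = pairEntropy b a := by
  unfold pairEntropy; ring_nf

lemma mul_le_mul_exp_add_mul_log_div {c m : ℝ} (hc : 0 < c) (hm : 0 < m) (v : ℝ) :
    c * v ≤ m * exp v + c * log (c / m) - c := by
  have h := mul_le_mul_of_nonneg_left (add_one_le_exp (v - log (c / m))) hc.le
  rw [exp_sub, exp_log (by positivity)] at h
  have : c * (exp v / (c / m)) = m * exp v := by field_simp
  linarith

lemma mul_add_mul_le_pairEntropy {a b v₁ v₂ : ℝ} (ha : 0 < a) (hb : 0 < b)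
    (hv : exp v₁ + exp v₂ ≤ 2) : a * v₁ + b * v₂ ≤ pairEntropy a b := by
  have hm : 0 < (a + b) / 2 := by positivity
  have h₁ := mul_le_mul_exp_add_mul_log_div ha hm v₁
  have h₂ := mul_le_mul_exp_add_mul_log_div hb hm v₂
  rw [log_div ha.ne' hm.ne'] at h₁
  rw [log_div hb.ne' hm.ne'] at h₂
  unfold pairEntropy
  nlinarith

/-- The variational formula `pairEntropy a b = sup {a v₁ + b v₂ | exp v₁ + exp v₂ ≤ 2}` makes
`pairEntropy` a supremum of linear forms, hence subadditive. -/
lemma pairEntropy_sum_le {ι : Type*} {s : Finset ι} (hs : s.Nonempty) {a b : ι → ℝ}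
    (ha : ∀ k ∈ s, 0 < a k) (hb : ∀ k ∈ s, 0 < b k) :
    pairEntropy (∑ k ∈ s, a k) (∑ k ∈ s, b k) ≤ ∑ k ∈ s, pairEntropy (a k) (b k) := by
  set A := ∑ k ∈ s, a k
  set B := ∑ k ∈ s, b k
  have hA : 0 < A := Finset.sum_pos ha hs
  have hB : 0 < B := Finset.sum_pos hb hs
  have hM : 0 < (A + B) / 2 := by positivity
  have hv : exp (log (A / ((A + B) / 2))) + exp (log (B / ((A + B) / 2))) ≤ 2 := by
    rw [exp_log (by positivity), exp_log (by positivity)]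
    exact le_of_eq (by field_simp)
  have hAB : pairEntropy A B = A * log (A / ((A + B) / 2)) + B * log (B / ((A + B) / 2)) := by
    rw [log_div hA.ne' hM.ne', log_div hB.ne' hM.ne']
    unfold pairEntropy
    ring
  calc pairEntropy A B
      = ∑ k ∈ s, (a k * log (A / ((A + B) / 2)) + b k * log (B / ((A + B) / 2))) := by
        rw [hAB, Finset.sum_add_distrib, Finset.sum_mul, Finset.sum_mul]
    _ ≤ ∑ k ∈ s, pairEntropy (a k) (b k) :=
        Finset.sum_le_sum fun k hk => mul_add_mul_le_pairEntropy (ha k hk) (hb k hk) hv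

lemma pairEntropy_exp_le (a b : ℝ) :
    pairEntropy (exp a) (exp b) ≤ (a - b) * (exp a - exp b) / 2 := by
  have hm : 0 < (exp a + exp b) / 2 := by positivity
  have hmid : (a + b) / 2 ≤ log ((exp a + exp b) / 2) := by
    rw [le_log_iff_exp_le hm]
    have := convexOn_exp.2 (Set.mem_univ a) (Set.mem_univ b) (by norm_num : (0 : ℝ) ≤ 1 / 2)
      (by norm_num : (0 : ℝ) ≤ 1 / 2) (by norm_num)
    simp only [smul_eq_mul] at this
    calc exp ((a + b) / 2) = exp (1 / 2 * a + 1 / 2 * b) := by ring_nf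
      _ ≤ 1 / 2 * exp a + 1 / 2 * exp b := this
      _ = (exp a + exp b) / 2 := by ring
  unfold pairEntropy
  rw [log_exp, log_exp]
  nlinarith

lemma mul_sub_exp_sub_exp_le (a b : ℝ) :
    (a - b) * (exp a - exp b) ≤ max (a - b) 0 ^ 2 * exp a + max (b - a) 0 ^ 2 * exp b := by
  wlog hba : b ≤ a generalizing a b
  · linarith [this b a (le_of_not_ge hba)]
  have hexp : exp a - exp b ≤ (a - b) * exp a := by
    have := add_one_le_exp (b - a)
    rw [exp_sub, le_div_iff₀ (exp_pos a)] at this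
    linarith
  rw [max_eq_left (sub_nonneg.2 hba), max_eq_right (sub_nonpos.2 hba)]
  nlinarith [sub_nonneg.2 hba, exp_pos b]

section BooleanCube

variable {ι : Type*} [DecidableEq ι]

def flipAt (i : ι) (s : ι → Bool) : ι → Bool := Function.update s i (!s i)

lemma flipAt_involutive (i : ι) : Function.Involutive (flipAt i) := fun s => by
  simp [flipAt]

lemma flipAt_cons_zero {n : ℕ} (b : Bool) (t : Fin n → Bool) :
    flipAt 0 (Fin.cons b t : Fin (n + 1) → Bool) = Fin.cons (!b) t := by
  simp [flipAt, Fin.update_cons_zero]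

lemma flipAt_cons_succ {n : ℕ} (i : Fin n) (b : Bool) (t : Fin n → Bool) :
    flipAt i.succ (Fin.cons b t : Fin (n + 1) → Bool) = Fin.cons b (flipAt i t) := by
  simp [flipAt, ← Fin.cons_update]

lemma sum_fun_fin_succ_bool {M : Type*} [AddCommMonoid M] {n : ℕ}
    (F : (Fin (n + 1) → Bool) → M) :
    ∑ s, F s = ∑ t, F (Fin.cons false t) + ∑ t, F (Fin.cons true t) := by
  rw [← (Fin.consEquiv fun _ => Bool).sum_comp, Fintype.sum_prod_type, Fintype.sum_bool, add_comm]
  rfl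

end BooleanCube

/-- `2 ^ n` times the entropy of `U` under the uniform measure on the cube. -/
def cubeEntropy {n : ℕ} (U : (Fin n → Bool) → ℝ) : ℝ :=
  ∑ s, U s * log (U s) - (∑ s, U s) * log ((∑ s, U s) / 2 ^ n)

lemma cubeEntropy_succ {n : ℕ} (U : (Fin (n + 1) → Bool) → ℝ) (hU : ∀ s, 0 < U s) :
    cubeEntropy U = cubeEntropy (fun t => U (Fin.cons false t))
      + cubeEntropy (fun t => U (Fin.cons true t))
      + pairEntropy (∑ t, U (Fin.cons false t)) (∑ t, U (Fin.cons true t)) := by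
  have hf : 0 < ∑ t : Fin n → Bool, U (Fin.cons false t) :=
    Finset.sum_pos (fun t _ => hU _) Finset.univ_nonempty
  have ht : 0 < ∑ t : Fin n → Bool, U (Fin.cons true t) :=
    Finset.sum_pos (fun t _ => hU _) Finset.univ_nonempty
  simp only [cubeEntropy, pairEntropy, sum_fun_fin_succ_bool U,
    sum_fun_fin_succ_bool fun s => U s * log (U s)]
  rw [log_div hf.ne' (by positivity), log_div ht.ne' (by positivity),
    log_div (by positivity) (by positivity), log_div (by positivity) (by positivity),
    log_pow, log_pow]
  push_cast
  ring

lemma sum_pairEntropy_flipAt_zero {n : ℕ} (U : (Fin (n + 1) → Bool) → ℝ) :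
    ∑ s, pairEntropy (U s) (U (flipAt 0 s))
      = 2 * ∑ t, pairEntropy (U (Fin.cons false t)) (U (Fin.cons true t)) := by
  simp only [sum_fun_fin_succ_bool fun s => pairEntropy (U s) (U (flipAt 0 s)),
    flipAt_cons_zero, Bool.not_false, Bool.not_true, pairEntropy_comm (U (Fin.cons true _))]
  ring

lemma sum_pairEntropy_flipAt_succ {n : ℕ} (U : (Fin (n + 1) → Bool) → ℝ) (i : Fin n) :
    ∑ s, pairEntropy (U s) (U (flipAt i.succ s))
      = ∑ t, pairEntropy (U (Fin.cons false t)) (U (Fin.cons false (flipAt i t)))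
        + ∑ t, pairEntropy (U (Fin.cons true t)) (U (Fin.cons true (flipAt i t))) := by
  simp only [sum_fun_fin_succ_bool fun s => pairEntropy (U s) (U (flipAt i.succ s)),
    flipAt_cons_succ]

/-- Tensorization of entropy on the Boolean cube. -/
theorem two_mul_cubeEntropy_le {n : ℕ} (U : (Fin n → Bool) → ℝ) (hU : ∀ s, 0 < U s) :
    2 * cubeEntropy U ≤ ∑ i, ∑ s, pairEntropy (U s) (U (flipAt i s)) := by
  induction n with
  | zero => simp [cubeEntropy]
  | succ n ih =>
    have hsub := pairEntropy_sum_le Finset.univ_nonempty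
      (fun t _ => hU (Fin.cons false t)) (fun t _ => hU (Fin.cons true t))
    rw [cubeEntropy_succ U hU, Fin.sum_univ_succ, sum_pairEntropy_flipAt_zero]
    simp only [sum_pairEntropy_flipAt_succ, Finset.sum_add_distrib]
    linarith [ih _ fun t => hU (Fin.cons false t), ih _ fun t => hU (Fin.cons true t)]

lemma sum_pairEntropy_exp_flipAt_le {ι : Type*} [Fintype ι] [DecidableEq ι]
    (w : (ι → Bool) → ℝ) (i : ι) :
    ∑ s, pairEntropy (exp (w s)) (exp (w (flipAt i s)))
      ≤ ∑ s, max (w s - w (flipAt i s)) 0 ^ 2 * exp (w s) := by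
  have hswap : ∑ s, max (w (flipAt i s) - w s) 0 ^ 2 * exp (w (flipAt i s))
      = ∑ s, max (w s - w (flipAt i s)) 0 ^ 2 * exp (w s) := by
    simpa [flipAt_involutive i _] using Equiv.sum_comp ((flipAt_involutive i).toPerm _)
      fun s => max (w s - w (flipAt i s)) 0 ^ 2 * exp (w s)
  calc ∑ s, pairEntropy (exp (w s)) (exp (w (flipAt i s)))
      ≤ ∑ s, (max (w s - w (flipAt i s)) 0 ^ 2 * exp (w s)
          + max (w (flipAt i s) - w s) 0 ^ 2 * exp (w (flipAt i s))) / 2 :=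
        Finset.sum_le_sum fun s _ => (pairEntropy_exp_le _ _).trans
          (div_le_div_of_nonneg_right (mul_sub_exp_sub_exp_le _ _) zero_le_two)
    _ = ∑ s, max (w s - w (flipAt i s)) 0 ^ 2 * exp (w s) := by
        rw [← Finset.sum_div, Finset.sum_add_distrib, hswap]
        ring

/-- Modified logarithmic Sobolev inequality on the cube for `exp (t z)`, in terms of the
one-sided increments of `z`. -/
lemma cubeEntropy_exp_mul_le {n : ℕ} (z : (Fin n → Bool) → ℝ) {v t : ℝ}
    (hv : ∀ s, ∑ i, max (z s - z (flipAt i s)) 0 ^ 2 ≤ v) (ht : 0 ≤ t) :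
    cubeEntropy (fun s => exp (t * z s)) ≤ v / 2 * t ^ 2 * ∑ s, exp (t * z s) := by
  have hscale : ∀ s i, max (t * z s - t * z (flipAt i s)) 0 ^ 2
      = t ^ 2 * max (z s - z (flipAt i s)) 0 ^ 2 := fun s i => by
    rw [← mul_sub, ← mul_pow, mul_max_of_nonneg _ _ ht, mul_zero]
  have h := two_mul_cubeEntropy_le _ fun s => exp_pos (t * z s)
  have hsum : ∑ i, ∑ s, pairEntropy (exp (t * z s)) (exp (t * z (flipAt i s)))
      ≤ 2 * (v / 2 * t ^ 2 * ∑ s, exp (t * z s)) :=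
    calc _ ≤ ∑ i, ∑ s, max (t * z s - t * z (flipAt i s)) 0 ^ 2 * exp (t * z s) :=
          Finset.sum_le_sum fun i _ => sum_pairEntropy_exp_flipAt_le (fun s => t * z s) i
      _ = ∑ s, t ^ 2 * (∑ i, max (z s - z (flipAt i s)) 0 ^ 2) * exp (t * z s) := by
          simp only [hscale, Finset.mul_sum, Finset.sum_mul]
          rw [Finset.sum_comm]
      _ ≤ ∑ s, t ^ 2 * v * exp (t * z s) := by
          gcongr with s
          exact hv s
      _ = 2 * (v / 2 * t ^ 2 * ∑ s, exp (t * z s)) := by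
          rw [Finset.mul_sum, Finset.mul_sum]
          exact Finset.sum_congr rfl fun s _ => by ring
  linarith

/-- Herbst's argument: an entropy bound for the log-moment generating function `L` makes
`L t / t - c t` antitone, and its limit at `0⁺` is `L' 0`. -/
theorem herbst_le {L L' : ℝ → ℝ} {c lam : ℝ} (hL : ∀ t, HasDerivAt L (L' t) t) (hL0 : L 0 = 0)
    (hent : ∀ t, 0 < t → t * L' t - L t ≤ c * t ^ 2) (hlam : 0 < lam) :
    L lam ≤ lam * L' 0 + c * lam ^ 2 := by
  set K : ℝ → ℝ := fun t => L t / t - c * t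
  have hK : ∀ t, 0 < t → HasDerivAt K ((L' t * t - L t * 1) / t ^ 2 - c * 1) t := fun t ht =>
    ((hL t).div (hasDerivAt_id t) ht.ne').sub ((hasDerivAt_id t).const_mul c)
  have hanti : AntitoneOn K (Set.Ioi 0) := by
    refine antitoneOn_of_hasDerivWithinAt_nonpos (convex_Ioi 0)
      (f' := fun t => (L' t * t - L t * 1) / t ^ 2 - c * 1)
      (fun t ht => (hK t ht).continuousAt.continuousWithinAt) (fun t ht => ?_) (fun t ht => ?_)
    · rw [interior_Ioi] at ht ⊢
      exact (hK t ht).hasDerivWithinAt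
    · rw [interior_Ioi] at ht
      rw [sub_nonpos, div_le_iff₀ (pow_pos ht 2)]
      linarith [hent t ht]
  have hslope : Filter.Tendsto (fun t => t⁻¹ • (L (0 + t) - L 0)) (nhdsWithin 0 (Set.Ioi 0))
      (nhds (L' 0)) := (hL 0).tendsto_slope_zero_right
  have hlin : Filter.Tendsto (fun t => c * t) (nhdsWithin 0 (Set.Ioi 0)) (nhds (c * 0)) :=
    ((continuous_const_mul c).tendsto 0).mono_left nhdsWithin_le_nhds
  have hlim : Filter.Tendsto K (nhdsWithin 0 (Set.Ioi 0)) (nhds (L' 0 - c * 0)) :=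
    (hslope.sub hlin).congr fun t => by simp [K, hL0, div_eq_inv_mul]
  have hle : K lam ≤ L' 0 - c * 0 := ge_of_tendsto hlim <| by
    filter_upwards [Ioo_mem_nhdsGT hlam] with t ht using hanti ht.1 hlam ht.2.le
  rw [mul_zero, sub_zero, sub_le_iff_le_add, div_le_iff₀ hlam] at hle
  nlinarith

theorem cube_mgf_le {n : ℕ} (z : (Fin n → Bool) → ℝ) {v t : ℝ}
    (hv : ∀ s, ∑ i, max (z s - z (flipAt i s)) 0 ^ 2 ≤ v) (ht : 0 < t) :
    (∑ s, exp (t * z s)) / 2 ^ n ≤ exp (t * ((∑ s, z s) / 2 ^ n) + v / 2 * t ^ 2) := by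
  set S : ℝ → ℝ := fun u => ∑ s, exp (u * z s)
  set S' : ℝ → ℝ := fun u => ∑ s, z s * exp (u * z s)
  have hSpos : ∀ u, 0 < S u := fun u =>
    Finset.sum_pos (fun s _ => exp_pos _) Finset.univ_nonempty
  have hS : ∀ u, HasDerivAt S (S' u) u := fun u =>
    HasDerivAt.fun_sum fun s _ => by simpa [mul_comm] using (hasDerivAt_mul_const (z s)).exp
  have hL : ∀ u, HasDerivAt (fun u => log (S u / 2 ^ n)) (S' u / S u) u := fun u => by
    convert ((hS u).div_const (2 ^ n)).log (div_pos (hSpos u) (by positivity)).ne' using 1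
    field_simp
  have hent : ∀ u, 0 < u → u * (S' u / S u) - log (S u / 2 ^ n) ≤ v / 2 * u ^ 2 := by
    intro u hu
    have hE : cubeEntropy (fun s => exp (u * z s)) = u * S' u - S u * log (S u / 2 ^ n) := by
      simp only [cubeEntropy, log_exp, S, S', Finset.mul_sum]
      congr 1
      exact Finset.sum_congr rfl fun s _ => by ring
    have h := cubeEntropy_exp_mul_le z hv hu.le
    rw [hE] at h
    calc u * (S' u / S u) - log (S u / 2 ^ n)
        = (u * S' u - S u * log (S u / 2 ^ n)) / S u := by field_simp [(hSpos u).ne']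
      _ ≤ v / 2 * u ^ 2 := by rwa [div_le_iff₀ (hSpos u)]
  have hL0 : log (S 0 / 2 ^ n) = 0 := by simp [S]
  have hS'0 : S' 0 / S 0 = (∑ s, z s) / 2 ^ n := by simp [S, S']
  have h := herbst_le hL hL0 hent ht
  rw [hS'0] at h
  calc S t / 2 ^ n = exp (log (S t / 2 ^ n)) :=
        (exp_log (div_pos (hSpos t) (by positivity))).symm
    _ ≤ _ := exp_le_exp.2 h

def signVector {ι : Type*} (s : ι → Bool) : ι → ℝ := fun i => if s i then 1 else -1

lemma signVector_injective {ι : Type*} : Function.Injective (signVector (ι := ι)) := by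
  intro s s' h
  funext i
  have hi := congrFun h i
  cases hs : s i <;> cases hs' : s' i <;> simp_all [signVector] <;> norm_num at hi

lemma abs_signVector {ι : Type*} (s : ι → Bool) (i : ι) : |signVector s i| = 1 := by
  unfold signVector; split_ifs <;> simp

lemma sum_signVector_smul_sub_flipAt {ι E : Type*} [Fintype ι] [DecidableEq ι] [AddCommGroup E]
    [Module ℝ E] (x : ι → E) (s : ι → Bool) (i : ι) :
    ∑ j, signVector s j • x j - ∑ j, signVector (flipAt i s) j • x j
      = (2 * signVector s i) • x i := by
  have hdiff : ∀ j, signVector s j - signVector (flipAt i s) j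
      = if j = i then 2 * signVector s i else 0 := fun j => by
    by_cases h : j = i
    · subst h
      cases h : s j <;> simp [signVector, flipAt, h] <;> norm_num
    · simp [signVector, flipAt, h]
  simp only [← Finset.sum_sub_distrib, ← sub_smul, hdiff, ite_smul, zero_smul,
    Finset.sum_ite_eq', Finset.mem_univ, if_true]

lemma ae_eq_one_or_eq_neg_one {Ω : Type*} [MeasurableSpace Ω] {μ : Measure Ω}
    [IsProbabilityMeasure μ] {X : Ω → ℝ} (hX : Measurable X)
    (h₁ : μ {ω | X ω = 1} = 1 / 2) (h₂ : μ {ω | X ω = -1} = 1 / 2) :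
    ∀ᵐ ω ∂μ, X ω = 1 ∨ X ω = -1 := by
  have hmeas : MeasurableSet {ω | X ω = -1} := hX (measurableSet_singleton _)
  have hdisj : Disjoint {ω | X ω = 1} {ω | X ω = -1} :=
    Set.disjoint_left.2 fun ω (h : X ω = 1) (h' : X ω = -1) => by norm_num [h] at h'
  have hfull : μ ({ω | X ω = 1} ∪ {ω | X ω = -1}) = μ Set.univ := by
    rw [measure_union hdisj hmeas, h₁, h₂, measure_univ, ENNReal.add_halves]
  exact (ae_iff_measure_eq ((hX (measurableSet_singleton _)).union hmeas).nullMeasurableSet).2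
    hfull |>.mono fun ω hω => hω

lemma measurableSet_iInter_preimage_singleton {Ω ι : Type*} [MeasurableSpace Ω] [Countable ι]
    {ε : ι → Ω → ℝ} (hmeas : ∀ i, Measurable (ε i)) (r : ι → ℝ) :
    MeasurableSet (⋂ i, ε i ⁻¹' {r i}) :=
  MeasurableSet.iInter fun i => hmeas i (measurableSet_singleton _)

section Rademacher

variable {Ω ι : Type*} [MeasurableSpace Ω] {μ : Measure Ω} [Fintype ι] {ε : ι → Ω → ℝ}
  (hrad : ∀ i, μ {ω | ε i ω = 1} = 1 / 2 ∧ μ {ω | ε i ω = -1} = 1 / 2)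
include hrad

lemma measure_iInter_preimage_signVector (hindep : iIndepFun ε μ) (s : ι → Bool) :
    μ (⋂ i, ε i ⁻¹' {signVector s i}) = 2⁻¹ ^ Fintype.card ι := by
  rw [hindep.meas_iInter fun i => ⟨{signVector s i}, measurableSet_singleton _, rfl⟩]
  have hhalf : ∀ i, μ (ε i ⁻¹' {signVector s i}) = 2⁻¹ := fun i => by
    unfold signVector
    split_ifs
    · exact (hrad i).1.trans (one_div 2)
    · exact (hrad i).2.trans (one_div 2)
  simp [hhalf]

variable [IsProbabilityMeasure μ] [DecidableEq ι] (hmeas : ∀ i, Measurable (ε i))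
include hmeas

/-- Almost surely the sign vector `(ε i ω)ᵢ` lies in exactly one of the atoms
`{ω | ε ω = signVector s}`. -/
lemma comp_ae_eq_sum_indicator {M : Type*} [AddCommMonoid M] (G : (ι → ℝ) → M) :
    (fun ω => G fun i => ε i ω) =ᵐ[μ]
      fun ω => ∑ s, (⋂ i, ε i ⁻¹' {signVector s i}).indicator (fun _ => G (signVector s)) ω := by
  filter_upwards [ae_all_iff.2 fun i => ae_eq_one_or_eq_neg_one (hmeas i) (hrad i).1 (hrad i).2]
    with ω hω
  obtain ⟨s₀, hs₀⟩ : ∃ s₀, (fun i => ε i ω) = signVector s₀ :=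
    ⟨fun i => decide (ε i ω = 1),
      funext fun i => by rcases hω i with h | h <;> simp [signVector, h]⟩
  have hmem : ∀ s, ω ∈ ⋂ i, ε i ⁻¹' {signVector s i} ↔ s₀ = s := fun s => by
    simp only [Set.mem_iInter, Set.mem_preimage, Set.mem_singleton_iff, ← funext_iff, hs₀,
      signVector_injective.eq_iff]
  rw [Finset.sum_eq_single s₀
      (fun s _ hs => Set.indicator_of_notMem (fun h => hs ((hmem s).1 h).symm) _) (by simp),
    Set.indicator_of_mem ((hmem s₀).2 rfl), hs₀]

variable (hindep : iIndepFun ε μ)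
include hindep

lemma lintegral_ofReal_comp_eq_sum_signVector (g : (ι → ℝ) → ℝ) (hg : ∀ e, 0 ≤ g e) :
    ∫⁻ ω, ENNReal.ofReal (g fun i => ε i ω) ∂μ
      = ENNReal.ofReal ((∑ s, g (signVector s)) / 2 ^ Fintype.card ι) := by
  have hA := fun s : ι → Bool => measurableSet_iInter_preimage_singleton hmeas (signVector s)
  rw [lintegral_congr_ae (comp_ae_eq_sum_indicator hrad hmeas fun e => ENNReal.ofReal (g e)),
    lintegral_finsetSum _ fun s _ => measurable_const.indicator (hA s)]
  simp only [lintegral_indicator_const (hA _), measure_iInter_preimage_signVector hrad hindep]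
  rw [ENNReal.ofReal_div_of_pos (by positivity), ENNReal.ofReal_sum_of_nonneg fun s _ => hg _,
    ENNReal.ofReal_pow zero_le_two, ENNReal.ofReal_ofNat, div_eq_mul_inv, Finset.sum_mul,
    ENNReal.inv_pow]

lemma integral_comp_eq_sum_signVector (G : (ι → ℝ) → ℝ) :
    ∫ ω, G (fun i => ε i ω) ∂μ = (∑ s, G (signVector s)) / 2 ^ Fintype.card ι := by
  have hA := fun s : ι → Bool => measurableSet_iInter_preimage_singleton hmeas (signVector s)
  rw [integral_congr_ae (comp_ae_eq_sum_indicator hrad hmeas G),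
    integral_finsetSum _ fun s _ => (integrable_const _).indicator (hA s)]
  simp only [integral_indicator_const _ (hA _), measureReal_def,
    measure_iInter_preimage_signVector hrad hindep]
  simp [div_eq_inv_mul, Finset.mul_sum]

end Rademacher

section Norming

variable {B : Type*} [NormedAddCommGroup B] [NormedSpace ℝ B] {D : Set (B →L[ℝ] ℝ)}

lemma abs_apply_le_norm_of_mem (hDball : ∀ f ∈ D, ‖f‖ ≤ 1) {f : B →L[ℝ] ℝ} (hf : f ∈ D)
    (v : B) : |f v| ≤ ‖v‖ :=
  (f.le_opNorm v).trans (mul_le_of_le_one_left (norm_nonneg v) (hDball f hf))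

lemma exists_mem_norm_sub_lt_abs_apply (hnorming : ∀ v : B, ‖v‖ = sSup ((fun f => |f v|) '' D))
    {v : B} (hv : 0 < ‖v‖) {η : ℝ} (hη : 0 < η) : ∃ f ∈ D, ‖v‖ - η < |f v| := by
  have hne : ((fun f : B →L[ℝ] ℝ => |f v|) '' D).Nonempty := by
    by_contra h
    rw [Set.not_nonempty_iff_eq_empty] at h
    rw [hnorming v, h, Real.sSup_empty] at hv
    exact lt_irrefl 0 hv
  obtain ⟨_, ⟨f, hf, rfl⟩, hlt⟩ :=
    exists_lt_of_lt_csSup (b := ‖v‖ - η) hne (by linarith [hnorming v])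
  exact ⟨f, hf, hlt⟩

lemma sum_sq_apply_le {ι : Type*} [Fintype ι] (hDball : ∀ f ∈ D, ‖f‖ ≤ 1) {x : ι → B} {σ : ℝ}
    (hσ : σ = sSup ((fun f : B →L[ℝ] ℝ => √(∑ i, f (x i) ^ 2)) '' D)) {f : B →L[ℝ] ℝ}
    (hf : f ∈ D) : ∑ i, f (x i) ^ 2 ≤ σ ^ 2 := by
  have hbdd : BddAbove ((fun f : B →L[ℝ] ℝ => √(∑ i, f (x i) ^ 2)) '' D) := by
    refine ⟨√(∑ i, ‖x i‖ ^ 2), ?_⟩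
    rintro _ ⟨g, hg, rfl⟩
    refine sqrt_le_sqrt (Finset.sum_le_sum fun i _ => ?_)
    rw [← sq_abs]
    exact pow_le_pow_left₀ (abs_nonneg _) (abs_apply_le_norm_of_mem hDball hg _) 2
  have hle : √(∑ i, f (x i) ^ 2) ≤ σ := hσ ▸ le_csSup hbdd ⟨f, hf, rfl⟩
  calc ∑ i, f (x i) ^ 2 = √(∑ i, f (x i) ^ 2) ^ 2 :=
        (sq_sqrt (Finset.sum_nonneg fun i _ => sq_nonneg _)).symm
    _ ≤ σ ^ 2 := pow_le_pow_left₀ (sqrt_nonneg _) hle 2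

/-- Flipping the `i`-th sign moves an almost norming functional `f` by `2 |f (x i)|`. -/
lemma sum_sq_posPart_norm_sub_flipAt_le {ι : Type*} [Fintype ι] [DecidableEq ι]
    (hDball : ∀ f ∈ D, ‖f‖ ≤ 1) (hnorming : ∀ v : B, ‖v‖ = sSup ((fun f => |f v|) '' D))
    {x : ι → B} {σ : ℝ} (hσ : σ = sSup ((fun f : B →L[ℝ] ℝ => √(∑ i, f (x i) ^ 2)) '' D))
    (s : ι → Bool) :
    ∑ i, max (‖∑ j, signVector s j • x j‖ - ‖∑ j, signVector (flipAt i s) j • x j‖) 0 ^ 2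
      ≤ 4 * σ ^ 2 := by
  set y : (ι → Bool) → B := fun s => ∑ j, signVector s j • x j
  change ∑ i, max (‖y s‖ - ‖y (flipAt i s)‖) 0 ^ 2 ≤ 4 * σ ^ 2
  rcases (norm_nonneg (y s)).eq_or_lt with h0 | hpos
  · have hzero : ∀ i, max (‖y s‖ - ‖y (flipAt i s)‖) 0 = 0 := fun i =>
      max_eq_right (by linarith [norm_nonneg (y (flipAt i s))])
    simp only [hzero, ne_eq, OfNat.ofNat_ne_zero, not_false_eq_true, zero_pow,
      Finset.sum_const_zero]
    positivity
  have hη : ∀ η > 0, ∑ i, max (‖y s‖ - ‖y (flipAt i s)‖) 0 ^ 2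
      ≤ 4 * σ ^ 2 + η * (4 * ∑ i, ‖x i‖ + Fintype.card ι * η) := by
    intro η hη
    obtain ⟨f, hf, hlt⟩ := exists_mem_norm_sub_lt_abs_apply hnorming hpos hη
    have hinc : ∀ i, max (‖y s‖ - ‖y (flipAt i s)‖) 0 ≤ 2 * |f (x i)| + η := fun i => by
      refine max_le ?_ (by positivity)
      have hflip : |f (y s)| - |f (y (flipAt i s))| ≤ 2 * |f (x i)| :=
        calc |f (y s)| - |f (y (flipAt i s))| ≤ |f (y s - y (flipAt i s))| := by
              rw [map_sub]
              exact abs_sub_abs_le_abs_sub _ _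
          _ = 2 * |f (x i)| := by
              rw [sum_signVector_smul_sub_flipAt, map_smul, smul_eq_mul, abs_mul, abs_mul,
                abs_signVector, abs_two, mul_one]
      linarith [abs_apply_le_norm_of_mem hDball hf (y (flipAt i s))]
    calc ∑ i, max (‖y s‖ - ‖y (flipAt i s)‖) 0 ^ 2 ≤ ∑ i, (2 * |f (x i)| + η) ^ 2 :=
          Finset.sum_le_sum fun i _ => pow_le_pow_left₀ (le_max_right _ _) (hinc i) 2
      _ = 4 * ∑ i, f (x i) ^ 2 + η * (4 * ∑ i, |f (x i)| + Fintype.card ι * η) := by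
          simp only [add_sq, mul_pow, sq_abs, Finset.sum_add_distrib, ← Finset.mul_sum,
            ← Finset.sum_mul, Finset.sum_const, Finset.card_univ, nsmul_eq_mul]
          ring
      _ ≤ 4 * σ ^ 2 + η * (4 * ∑ i, ‖x i‖ + Fintype.card ι * η) := by
          gcongr with i
          · exact sum_sq_apply_le hDball hσ hf
          · exact abs_apply_le_norm_of_mem hDball hf (x i)
  have hlim : Filter.Tendsto (fun η => 4 * σ ^ 2 + η * (4 * ∑ i, ‖x i‖ + Fintype.card ι * η))
      (nhdsWithin 0 (Set.Ioi 0)) (nhds (4 * σ ^ 2)) := by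
    have hcont : Continuous fun η : ℝ =>
        4 * σ ^ 2 + η * (4 * ∑ i, ‖x i‖ + Fintype.card ι * η) := by fun_prop
    simpa using (hcont.tendsto 0).mono_left nhdsWithin_le_nhds
  exact ge_of_tendsto hlim (eventually_nhdsWithin_of_forall hη)

end Norming

theorem statement_10_general {Ω : Type*} [MeasureSpace Ω]
    [IsProbabilityMeasure (volume : Measure Ω)]
    {B : Type*} [NormedAddCommGroup B] [NormedSpace ℝ B]
    {n : ℕ} (ε : Fin n → Ω → ℝ) (hmeas : ∀ i, Measurable (ε i))
    (hindep : iIndepFun ε volume)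
    (hrad : ∀ i, volume {ω | ε i ω = 1} = 1 / 2 ∧ volume {ω | ε i ω = -1} = 1 / 2)
    (D : Set (B →L[ℝ] ℝ)) (hDball : ∀ f ∈ D, ‖f‖ ≤ 1)
    (hnorming : ∀ v : B, ‖v‖ = sSup ((fun f : B →L[ℝ] ℝ => |f v|) '' D))
    (x : Fin n → B) (σ : ℝ)
    (hσ : σ = sSup ((fun f : B →L[ℝ] ℝ => Real.sqrt (∑ i, (f (x i)) ^ 2)) '' D))
    (lam : ℝ) (hlam : 0 < lam) :
    (∫⁻ ω, ENNReal.ofReal (Real.exp (lam * ‖∑ i, ε i ω • x i‖)))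
      ≤ ENNReal.ofReal (16 * Real.exp
          (lam * Real.sqrt (2 * ∫ ω, ‖∑ i, ε i ω • x i‖ ^ 2) + 4 * (lam * σ) ^ 2)) := by
  set c : (Fin n → Bool) → ℝ := fun s => ‖∑ i, signVector s i • x i‖
  rw [lintegral_ofReal_comp_eq_sum_signVector hrad hmeas hindep
      (fun e => exp (lam * ‖∑ i, e i • x i‖)) fun _ => (exp_pos _).le,
    integral_comp_eq_sum_signVector hrad hmeas hindep fun e => ‖∑ i, e i • x i‖ ^ 2,
    Fintype.card_fin]
  refine ENNReal.ofReal_le_ofReal ?_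
  have hmean : (∑ s, c s) / 2 ^ n ≤ √(2 * ((∑ s, c s ^ 2) / 2 ^ n)) := by
    have hsq := sum_div_card_sq_le_sum_sq_div_card (s := Finset.univ) (f := c)
    simp only [Finset.card_univ, Fintype.card_fun, Fintype.card_bool, Fintype.card_fin] at hsq
    push_cast at hsq
    refine (le_abs_self _).trans (abs_le_sqrt ?_)
    have : 0 ≤ (∑ s, c s ^ 2) / 2 ^ n := by positivity
    linarith
  calc (∑ s, exp (lam * c s)) / 2 ^ n
      ≤ exp (lam * ((∑ s, c s) / 2 ^ n) + 4 * σ ^ 2 / 2 * lam ^ 2) :=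
        cube_mgf_le c (sum_sq_posPart_norm_sub_flipAt_le hDball hnorming hσ) hlam
    _ ≤ exp (lam * √(2 * ((∑ s, c s ^ 2) / 2 ^ n)) + 4 * (lam * σ) ^ 2) :=
        exp_le_exp.2 (add_le_add (mul_le_mul_of_nonneg_left hmean hlam.le)
          (by nlinarith [sq_nonneg (lam * σ)]))
    _ ≤ 16 * exp (lam * √(2 * ((∑ s, c s ^ 2) / 2 ^ n)) + 4 * (lam * σ) ^ 2) :=
        le_mul_of_one_le_left (exp_pos _).le (by norm_num)

/-- **Corollary A.1.**  Let `ε₁,…,ε_n` be independent Rademacher random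
variables, `B` a Banach space whose norm is computed as a supremum
`‖x‖ = sup_{f ∈ D} |f(x)|` over a countable subset `D` of the unit ball of the
dual, and `x₁,…,x_n ∈ B`.  With `Z = ‖∑_i ε_i x_i‖` and
`σ = sup_{f ∈ D} √(∑_i f(x_i)²)`, for every `λ > 0`,
`E[e^{λZ}] ≤ 16 exp(λ√(2E[Z²]) + 4(λσ)²)`. -/
theorem statement_10 {Ω : Type*} [MeasureSpace Ω]
    [IsProbabilityMeasure (volume : Measure Ω)]
    {B : Type*} [NormedAddCommGroup B] [NormedSpace ℝ B]
    {n : ℕ} (ε : Fin n → Ω → ℝ) (hmeas : ∀ i, Measurable (ε i))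
    (hindep : iIndepFun ε volume)
    (hrad : ∀ i, volume {ω | ε i ω = 1} = 1 / 2 ∧ volume {ω | ε i ω = -1} = 1 / 2)
    (D : Set (B →L[ℝ] ℝ)) (hD : D.Countable) (hDball : ∀ f ∈ D, ‖f‖ ≤ 1)
    (hnorming : ∀ v : B, ‖v‖ = sSup ((fun f : B →L[ℝ] ℝ => |f v|) '' D))
    (x : Fin n → B) (σ : ℝ)
    (hσ : σ = sSup ((fun f : B →L[ℝ] ℝ => Real.sqrt (∑ i, (f (x i)) ^ 2)) '' D))
    (lam : ℝ) (hlam : 0 < lam) :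
    (∫⁻ ω, ENNReal.ofReal (Real.exp (lam * ‖∑ i, ε i ω • x i‖)))
      ≤ ENNReal.ofReal (16 * Real.exp
          (lam * Real.sqrt (2 * ∫ ω, ‖∑ i, ε i ω • x i‖ ^ 2) + 4 * (lam * σ) ^ 2)) :=
  statement_10_general ε hmeas hindep hrad D hDball hnorming x σ hσ lam hlam
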